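/- arXiv:2308.01166 — 5 statements merged into one kernel-verified Lean document; each statement's English description precedes it below -/
import Mathlib

section
/- For nonzero complex coefficients c_1,…,c_{ℓ-1}, the operators M(c) = Σ_{k=1}^{ℓ-1} c_k b'_{k+1} b_k, M'(c) = Σ_{k=1}^{ℓ-1} (k(ℓ-k)/c_k) b'_k b_{k+1}, and Z = Σ_{k=1}^{ℓ} (2k-ℓ-1) b'_k b_k satisfy [Z, M(c)] = 2M(c), [Z, M'(c)] = -2M'(c), and [M(c), M'(c)] = Z. -/
/-!
Write `E i j = b' i * b j`. The anticommutation relations give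
`⁅E i j, E k l⁆ = δ j k • E i l - δ l i • E k j`, so `Z = ∑ (2k-ℓ-1) • E k k` acts on each
`E (k+1) k` by the weight difference `2`, and on each `E k (k+1)` by `-2`. In `⁅M, M'⁆` only the
diagonal terms survive, the couplings `c k` cancel, and what is left is
`∑ k(ℓ-k) • (E (k+1) (k+1) - E k k)`; since `k(ℓ-k)` vanishes at `k = 0` and `k = ℓ`, summation by
parts turns this into `Z`.
-/

open Finset

theorem sum_range_smul_sub_add_smul {R M : Type*} [CommRing R] [AddCommGroup M] [Module R M]
    (a : ℕ → R) (F : ℕ → M) (n : ℕ) :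
    ∑ k ∈ range n, a k • (F (k + 1) - F k) + a 0 • F 0
      = a n • F n + ∑ k ∈ range n, (a k - a (k + 1)) • F (k + 1) := by
  induction n with
  | zero => simp
  | succ n ih =>
    rw [sum_range_succ, sum_range_succ, add_right_comm, ih]
    module

theorem sum_Icc_mul_sub_smul_sub {R M : Type*} [CommRing R] [AddCommGroup M] [Module R M]
    (ℓ : ℕ) (F : ℕ → M) :
    ∑ k ∈ Icc 1 (ℓ - 1), ((k : R) * (ℓ - k)) • (F (k + 1) - F k)
      = ∑ k ∈ Icc 1 ℓ, (2 * (k : R) - ℓ - 1) • F k := by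
  have hrange : ∑ k ∈ Icc 1 (ℓ - 1), ((k : R) * (ℓ - k)) • (F (k + 1) - F k)
      = ∑ k ∈ range ℓ, ((k : R) * (ℓ - k)) • (F (k + 1) - F k) := by
    refine sum_subset (fun k hk => ?_) fun k hk hk' => ?_
    · simp only [mem_Icc, mem_range] at hk ⊢; omega
    · obtain rfl : k = 0 := by simp only [mem_Icc, mem_range] at hk hk'; omega
      simp
  have hparts := sum_range_smul_sub_add_smul (fun k : ℕ => (k : R) * (ℓ - k)) F ℓ
  simp only [Nat.cast_zero, zero_mul, zero_smul, add_zero, sub_self, mul_zero, zero_add] at hparts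
  rw [hrange, hparts, range_eq_Ico, ← Ico_add_one_right_eq_Icc,
    ← sum_Ico_add' (fun k : ℕ => (2 * (k : R) - ℓ - 1) • F k) 0 ℓ 1]
  refine sum_congr rfl fun k _ => ?_
  congr 1
  push_cast
  ring

section

-- Only local, as in Mathlib: globally these instances would change how `•` elaborates.
attribute [local instance] LieRing.ofAssociativeRing LieAlgebra.ofAssociativeAlgebra

theorem lie_mul_mul_of_anticommute {A : Type*} [Ring A] {p q r s α β : A}
    (hpr : p * r + r * p = 0) (hqs : q * s + s * q = 0)
    (hqr : q * r + r * q = α) (hsp : s * p + p * s = β)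
    (hα : Commute p α) (hβ : Commute r β) :
    ⁅p * q, r * s⁆ = α * (p * s) - β * (r * q) :=
  calc ⁅p * q, r * s⁆
      = p * (q * r + r * q) * s - r * (s * p + p * s) * q
          - (p * r + r * p) * q * s + r * p * (q * s + s * q) := by
        rw [Ring.lie_def]; noncomm_ring
    _ = α * (p * s) - β * (r * q) := by
        rw [hqr, hsp, hpr, hqs, hα.eq, hβ.eq]; noncomm_ring

structure IsCAR {A : Type*} [Ring A] (s : Finset ℕ) (b b' : ℕ → A) : Prop where
  anticomm : ∀ m ∈ s, ∀ n ∈ s, b m * b n + b n * b m = 0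
  anticomm' : ∀ m ∈ s, ∀ n ∈ s, b' m * b' n + b' n * b' m = 0
  anticomm_dual : ∀ m ∈ s, ∀ n ∈ s, b m * b' n + b' n * b m = if m = n then 1 else 0

namespace IsCAR

variable {A : Type*} [Ring A] {s : Finset ℕ} {b b' : ℕ → A} {i j k l : ℕ}

theorem lie_mul_mul (h : IsCAR s b b') (hi : i ∈ s) (hj : j ∈ s) (hk : k ∈ s) (hl : l ∈ s) :
    ⁅b' i * b j, b' k * b l⁆
      = (if j = k then b' i * b l else 0) - (if l = i then b' k * b j else 0) := by
  rw [lie_mul_mul_of_anticommute (h.anticomm' i hi k hk) (h.anticomm j hj l hl)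
    (h.anticomm_dual j hj k hk) (h.anticomm_dual l hl i hi) (by split_ifs <;> simp)
    (by split_ifs <;> simp)]
  simp only [ite_mul, one_mul, zero_mul]

theorem lie_raise_lower (h : IsCAR s b b') (hj : j ∈ s) (hj' : j + 1 ∈ s) (hk : k ∈ s)
    (hk' : k + 1 ∈ s) :
    ⁅b' (j + 1) * b j, b' k * b (k + 1)⁆
      = if j = k then b' (k + 1) * b (k + 1) - b' k * b k else 0 := by
  rw [h.lie_mul_mul hj' hj hk hk']
  by_cases hjk : j = k
  · subst hjk; simp
  · simp [hjk, Ne.symm hjk]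

variable {R : Type*} [CommRing R] [Algebra R A]

theorem lie_sum_diag (h : IsCAR s b b') (w : ℕ → R) (hk : k ∈ s) (hl : l ∈ s) :
    ⁅∑ j ∈ s, w j • (b' j * b j), b' k * b l⁆ = (w k - w l) • (b' k * b l) :=
  calc ⁅∑ j ∈ s, w j • (b' j * b j), b' k * b l⁆
      = ∑ j ∈ s, ((if j = k then w j • (b' j * b l) else 0)
          - (if l = j then w j • (b' k * b j) else 0)) := by
        rw [sum_lie]
        refine sum_congr rfl fun j hj => ?_
        rw [smul_lie, h.lie_mul_mul hj hj hk hl, smul_sub, smul_ite, smul_ite, smul_zero]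
    _ = (w k - w l) • (b' k * b l) := by
        rw [sum_sub_distrib, sum_ite_eq', sum_ite_eq, if_pos hk, if_pos hl, sub_smul]

theorem lie_sum_raise_sum_lower (h : IsCAR s b b') {t : Finset ℕ}
    (ht : ∀ k ∈ t, k ∈ s ∧ k + 1 ∈ s) (u v : ℕ → R) :
    ⁅∑ j ∈ t, u j • (b' (j + 1) * b j), ∑ k ∈ t, v k • (b' k * b (k + 1))⁆
      = ∑ k ∈ t, (u k * v k) • (b' (k + 1) * b (k + 1) - b' k * b k) := by
  rw [sum_lie_sum]
  refine sum_congr rfl fun j hj => ?_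
  calc ∑ k ∈ t, ⁅u j • (b' (j + 1) * b j), v k • (b' k * b (k + 1))⁆
      = ∑ k ∈ t, if j = k then (u j * v k) • (b' (k + 1) * b (k + 1) - b' k * b k) else 0 := by
        refine sum_congr rfl fun k hk => ?_
        rw [smul_lie, lie_smul (R := R),
          h.lie_raise_lower (ht j hj).1 (ht j hj).2 (ht k hk).1 (ht k hk).2, smul_smul, smul_ite,
          smul_zero]
    _ = (u j * v j) • (b' (j + 1) * b (j + 1) - b' j * b j) := by rw [sum_ite_eq, if_pos hj]

end IsCAR

end

theorem sl2_triple_of_CAR_varying_general (ℓ : ℕ)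
    (A : Type*) [Ring A] [Algebra ℂ A] (b b' : ℕ → A)
    (hbb : ∀ m ∈ Finset.Icc 1 ℓ, ∀ n ∈ Finset.Icc 1 ℓ, b m * b n + b n * b m = 0)
    (hb'b' : ∀ m ∈ Finset.Icc 1 ℓ, ∀ n ∈ Finset.Icc 1 ℓ, b' m * b' n + b' n * b' m = 0)
    (hbb' : ∀ m ∈ Finset.Icc 1 ℓ, ∀ n ∈ Finset.Icc 1 ℓ,
      b m * b' n + b' n * b m = if m = n then 1 else 0)
    (c : ℕ → ℂ) (hc : ∀ k ∈ Finset.Icc 1 (ℓ - 1), c k ≠ 0)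
    (M M' Z : A)
    (hM : M = ∑ k ∈ Finset.Icc 1 (ℓ - 1), (c k) • (b' (k + 1) * b k))
    (hM' : M' = ∑ k ∈ Finset.Icc 1 (ℓ - 1),
      ((k : ℂ) * ((ℓ : ℂ) - k) / c k) • (b' k * b (k + 1)))
    (hZ : Z = ∑ k ∈ Finset.Icc 1 ℓ, ((2 * (k : ℂ) - ℓ - 1)) • (b' k * b k)) :
    Z * M - M * Z = 2 * M ∧ Z * M' - M' * Z = -(2 * M') ∧ M * M' - M' * M = Z := by
  let _ : LieRing A := LieRing.ofAssociativeRing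
  let _ : LieAlgebra ℂ A := LieAlgebra.ofAssociativeAlgebra
  have hcar : IsCAR (Icc 1 ℓ) b b' := ⟨hbb, hb'b', hbb'⟩
  have hmem : ∀ k ∈ Icc 1 (ℓ - 1), k ∈ Icc 1 ℓ ∧ k + 1 ∈ Icc 1 ℓ := by
    intro k hk
    simp only [mem_Icc] at hk ⊢
    omega
  simp only [← LieRing.of_associative_ring_bracket]
  have two_mul_eq_smul : ∀ x : A, 2 * x = (2 : ℂ) • x := fun x => by rw [two_smul, two_mul]
  refine ⟨?_, ?_, ?_⟩
  · rw [two_mul_eq_smul, hZ, hM, lie_sum, smul_sum]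
    refine sum_congr rfl fun k hk => ?_
    rw [lie_smul (R := ℂ), hcar.lie_sum_diag _ (hmem k hk).2 (hmem k hk).1, smul_comm]
    congr 2
    push_cast
    ring
  · rw [two_mul_eq_smul, ← neg_smul, hZ, hM', lie_sum, smul_sum]
    refine sum_congr rfl fun k hk => ?_
    rw [lie_smul (R := ℂ), hcar.lie_sum_diag _ (hmem k hk).1 (hmem k hk).2, smul_comm]
    congr 2
    push_cast
    ring
  · rw [hM, hM', hcar.lie_sum_raise_sum_lower hmem, hZ, ← sum_Icc_mul_sub_smul_sub]
    refine sum_congr rfl fun k hk => ?_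
    rw [mul_div_cancel₀ _ (hc k hk)]

/-- the sl₂-triple relations also hold for spatially varying nonzero
couplings `c_k`:  M(c) = Σ c_k b'_{k+1} b_k,  M'(c) = Σ (k(ℓ-k)/c_k) b'_k b_{k+1},
Z = Σ (2k-ℓ-1) b'_k b_k satisfy [Z,M(c)] = 2M(c), [Z,M'(c)] = -2M'(c), [M(c),M'(c)] = Z. -/
theorem sl2_triple_of_CAR_varying (ℓ : ℕ) (hℓ : 1 ≤ ℓ)
    (A : Type*) [Ring A] [Algebra ℂ A] (b b' : ℕ → A)
    (hbb : ∀ m ∈ Finset.Icc 1 ℓ, ∀ n ∈ Finset.Icc 1 ℓ, b m * b n + b n * b m = 0)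
    (hb'b' : ∀ m ∈ Finset.Icc 1 ℓ, ∀ n ∈ Finset.Icc 1 ℓ, b' m * b' n + b' n * b' m = 0)
    (hbb' : ∀ m ∈ Finset.Icc 1 ℓ, ∀ n ∈ Finset.Icc 1 ℓ,
      b m * b' n + b' n * b m = if m = n then 1 else 0)
    (c : ℕ → ℂ) (hc : ∀ k ∈ Finset.Icc 1 (ℓ - 1), c k ≠ 0)
    (M M' Z : A)
    (hM : M = ∑ k ∈ Finset.Icc 1 (ℓ - 1), (c k) • (b' (k + 1) * b k))
    (hM' : M' = ∑ k ∈ Finset.Icc 1 (ℓ - 1),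
      ((k : ℂ) * ((ℓ : ℂ) - k) / c k) • (b' k * b (k + 1)))
    (hZ : Z = ∑ k ∈ Finset.Icc 1 ℓ, ((2 * (k : ℂ) - ℓ - 1)) • (b' k * b k)) :
    Z * M - M * Z = 2 * M ∧ Z * M' - M' * Z = -(2 * M') ∧ M * M' - M' * M = Z :=
  sl2_triple_of_CAR_varying_general ℓ A b b' hbb hb'b' hbb' c hc M M' Z hM hM' hZ
end

section
/- The nilpotent shift map M_{ℓ,m}^r : V_{ℓ,m}^r → V_{ℓ,m}^{r+1} is injective whenever r ≤ ⌊(m(ℓ-m)-1)/2⌋. -/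
/-!
Besides the shift `M`, which moves a particle from site `s` to `s + 1`, consider the operator `F`
moving a particle from site `s + 1` to `s` with coefficient `s (ℓ - s)`. On one particle `(M, F)`
is the pair `(e, f)` of the `ℓ`-dimensional irreducible `sl₂`-module, and on configurations both
act as derivations. Moves of different particles commute, so `[M, F]` is diagonal, with
eigenvalue `2r - m(ℓ - m)` on configurations of `m` particles and weight `r`. Moreover `F` is
the adjoint of `M` for the inner product in which a configuration `T` has squared norm
`∏_{t ∈ T} ∏_{s < t} s (ℓ - s)`. Hence if `f` has weight `r` and `M f = 0`, then
`‖F f‖² = ⟨f, M F f⟩ = ⟨f, [M, F] f⟩ = (2r - m(ℓ - m)) ‖f‖²`,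
which forces `f = 0` when `2r < m(ℓ - m)`.
-/

open Finset

/-- Number of ways to obtain the configuration `T` from `S` by moving one
occupied site `k ∈ S` to `k+1` (allowed when `k+1` is still a site and `k+1 ∉ S`).
Sites are the elements of `Fin ℓ`, thought of as sites `1,…,ℓ` via `k ↦ k+1`.
(Uses classical decidability.) -/
noncomputable def moveCount {ℓ : ℕ} (S T : Finset (Fin ℓ)) : ℕ := by
  classical
  exact (S.filter (fun k => ∃ h : k.val + 1 < ℓ,
      (⟨k.val + 1, h⟩ : Fin ℓ) ∉ S ∧
      T = insert (⟨k.val + 1, h⟩ : Fin ℓ) (S.erase k))).card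

/-- The nilpotent shift operator `M` on the space spanned by all occupation
configurations: a configuration `S` is sent to the sum of all configurations
obtained by moving one particle one site to the right. -/
noncomputable def MFull (ℓ : ℕ) :
    (Finset (Fin ℓ) → ℂ) →ₗ[ℂ] (Finset (Fin ℓ) → ℂ) where
  toFun f := fun T => ∑ S : Finset (Fin ℓ), (moveCount S T : ℂ) * f S
  map_add' f g := by
    funext T
    simp [Pi.add_apply, mul_add, Finset.sum_add_distrib]
  map_smul' c f := by
    funext T
    simp only [Pi.smul_apply, smul_eq_mul, RingHom.id_apply, Finset.mul_sum]
    exact Finset.sum_congr rfl fun S _ => by ring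

/-- `Vw ℓ m r` : the weight space `V_{ℓ,m}^r`, spanned by the configurations of
`m` particles with weight `r`, i.e. subsets `S` of the `ℓ` sites with
`|S| = m` and `Σ_{k∈S} k = r + m(m+1)/2` (sites labelled `1,…,ℓ`). -/
noncomputable def Vw (ℓ m r : ℕ) : Submodule ℂ (Finset (Fin ℓ) → ℂ) where
  carrier := {f | ∀ S, f S ≠ 0 → S.card = m ∧ ∑ k ∈ S, (k.val + 1) = r + m * (m + 1) / 2}
  zero_mem' := by intro S hS; exact absurd rfl hS
  add_mem' := by
    intro f g hf hg S hS
    by_cases h : f S = 0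
    · exact hg S (by simpa [h] using hS)
    · exact hf S h
  smul_mem' := by
    intro c f hf S hS
    exact hf S (fun h => hS (by simp [h]))

open Order ComplexConjugate

namespace Fin

variable {ℓ : ℕ} {k : Fin ℓ}

lemma not_isMax_iff_val_add_one_lt : ¬IsMax k ↔ k.val + 1 < ℓ := by
  rw [not_isMax_iff]
  exact ⟨fun ⟨b, hb⟩ => lt_of_le_of_lt (Fin.lt_def.1 hb) b.isLt,
    fun h => ⟨⟨k.val + 1, h⟩, by simp [Fin.lt_def]⟩⟩

lemma not_isMin_iff_val_pos : ¬IsMin k ↔ 0 < k.val := by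
  rw [not_isMin_iff]
  exact ⟨fun ⟨b, hb⟩ => lt_of_le_of_lt (Nat.zero_le _) (Fin.lt_def.1 hb),
    fun h => ⟨⟨k.val - 1, by omega⟩, by simp [Fin.lt_def]; omega⟩⟩

lemma val_orderSucc_of_not_isMax (h : ¬IsMax k) : (Order.succ k).val = k.val + 1 :=
  (Nat.covBy_iff_add_one_eq.1 (Fin.covBy_iff.1 (covBy_succ_of_not_isMax h))).symm

lemma val_orderPred_of_not_isMin (h : ¬IsMin k) : (Order.pred k).val + 1 = k.val :=
  Nat.covBy_iff_add_one_eq.1 (Fin.covBy_iff.1 (pred_covBy_of_not_isMin h))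

end Fin

lemma eq_zero_of_sum_mul_nonneg {ι : Type*} {s : Finset ι} {a q : ι → ℝ}
    (hq : ∀ i ∈ s, 0 ≤ q i) (ha : ∀ i ∈ s, q i ≠ 0 → a i < 0)
    (h : 0 ≤ ∑ i ∈ s, a i * q i) {i : ι} (hi : i ∈ s) : q i = 0 := by
  have hterm : ∀ i ∈ s, a i * q i ≤ 0 := fun i hi => by
    by_cases hqi : q i = 0
    · simp [hqi]
    · exact mul_nonpos_of_nonpos_of_nonneg (ha i hi hqi).le (hq i hi)
  have hzero := (sum_eq_zero_iff_of_nonpos hterm).1 (le_antisymm (sum_nonpos hterm) h) i hi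
  by_contra hqi
  exact (mul_neg_of_neg_of_pos (ha i hi hqi) (lt_of_le_of_ne (hq i hi) (Ne.symm hqi))).ne hzero

namespace FermionShift

variable {ℓ : ℕ} {S T : Finset (Fin ℓ)} {k j : Fin ℓ}

noncomputable def lowerCoeff (ℓ n : ℕ) : ℝ := n * (ℓ - n)

noncomputable def siteNormSq (ℓ n : ℕ) : ℝ := ∏ i ∈ range n, lowerCoeff ℓ (i + 1)

noncomputable def configNormSq (S : Finset (Fin ℓ)) : ℝ := ∏ k ∈ S, siteNormSq ℓ k.val

lemma lowerCoeff_pos {n : ℕ} (h₀ : 0 < n) (hℓ : n < ℓ) : 0 < lowerCoeff ℓ n :=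
  mul_pos (by exact_mod_cast h₀) (sub_pos.2 (by exact_mod_cast hℓ))

lemma configNormSq_pos (S : Finset (Fin ℓ)) : 0 < configNormSq S :=
  prod_pos fun k _ => prod_pos fun i hi => lowerCoeff_pos i.succ_pos
    (by have := k.isLt; have := mem_range.1 hi; omega)

def moveRight (S : Finset (Fin ℓ)) (k : Fin ℓ) : Finset (Fin ℓ) := insert (succ k) (S.erase k)

def moveLeft (T : Finset (Fin ℓ)) (j : Fin ℓ) : Finset (Fin ℓ) := insert (pred j) (T.erase j)

/-- `Order.succ` fixes the last site, which then lies in `S`: no boundary condition is needed. -/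
def rightMovable (S : Finset (Fin ℓ)) : Finset (Fin ℓ) := S.filter (succ · ∉ S)

def leftMovable (T : Finset (Fin ℓ)) : Finset (Fin ℓ) := T.filter (pred · ∉ T)

lemma mem_rightMovable : k ∈ rightMovable S ↔ k ∈ S ∧ succ k ∉ S := mem_filter

lemma mem_leftMovable : j ∈ leftMovable T ↔ j ∈ T ∧ pred j ∉ T := mem_filter

lemma not_isMax_of_mem_rightMovable (hk : k ∈ rightMovable S) : ¬IsMax k := fun h =>
  (mem_rightMovable.1 hk).2 ((succ_eq_iff_isMax.2 h).symm ▸ (mem_rightMovable.1 hk).1)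

lemma not_isMin_of_mem_leftMovable (hj : j ∈ leftMovable T) : ¬IsMin j := fun h =>
  (mem_leftMovable.1 hj).2 ((pred_eq_iff_isMin.2 h).symm ▸ (mem_leftMovable.1 hj).1)

lemma moveLeft_moveRight (hk : k ∈ rightMovable S) : moveLeft (moveRight S k) (succ k) = S := by
  obtain ⟨hkS, hsk⟩ := mem_rightMovable.1 hk
  rw [moveLeft, moveRight, pred_succ_of_not_isMax (not_isMax_of_mem_rightMovable hk),
    erase_insert (fun h => hsk (mem_of_mem_erase h)), insert_erase hkS]

lemma moveRight_moveLeft (hj : j ∈ leftMovable T) : moveRight (moveLeft T j) (pred j) = T := by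
  obtain ⟨hjT, hpj⟩ := mem_leftMovable.1 hj
  rw [moveLeft, moveRight, succ_pred_of_not_isMin (not_isMin_of_mem_leftMovable hj),
    erase_insert (fun h => hpj (mem_of_mem_erase h)), insert_erase hjT]

lemma succ_mem_leftMovable_moveRight (hk : k ∈ rightMovable S) :
    succ k ∈ leftMovable (moveRight S k) := by
  refine mem_leftMovable.2 ⟨mem_insert_self _ _, ?_⟩
  rw [pred_succ_of_not_isMax (not_isMax_of_mem_rightMovable hk), moveRight, mem_insert, mem_erase]
  exact fun h => h.elim (lt_succ_of_not_isMax (not_isMax_of_mem_rightMovable hk)).ne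
    fun h => h.1 rfl

lemma pred_mem_rightMovable_moveLeft (hj : j ∈ leftMovable T) :
    pred j ∈ rightMovable (moveLeft T j) := by
  refine mem_rightMovable.2 ⟨mem_insert_self _ _, ?_⟩
  rw [succ_pred_of_not_isMin (not_isMin_of_mem_leftMovable hj), moveLeft, mem_insert, mem_erase]
  exact fun h => h.elim (pred_lt_of_not_isMin (not_isMin_of_mem_leftMovable hj)).ne'
    fun h => h.1 rfl

lemma configNormSq_moveRight (hk : k ∈ rightMovable S) :
    configNormSq (moveRight S k) = lowerCoeff ℓ (k.val + 1) * configNormSq S := by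
  obtain ⟨hkS, hsk⟩ := mem_rightMovable.1 hk
  rw [configNormSq, moveRight, prod_insert (fun h => hsk (mem_of_mem_erase h)),
    Fin.val_orderSucc_of_not_isMax (not_isMax_of_mem_rightMovable hk), siteNormSq,
    prod_range_succ, configNormSq, ← mul_prod_erase S _ hkS, siteNormSq]
  ring

lemma sum_sum_rightMovable {M : Type*} [AddCommMonoid M]
    (Φ : Finset (Fin ℓ) → Finset (Fin ℓ) → M) :
    ∑ S, ∑ k ∈ rightMovable S, Φ S (moveRight S k) =
      ∑ T, ∑ j ∈ leftMovable T, Φ (moveLeft T j) T := by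
  rw [sum_sigma', sum_sigma']
  refine sum_nbij' (fun p => ⟨moveRight p.1 p.2, succ p.2⟩)
    (fun p => ⟨moveLeft p.1 p.2, pred p.2⟩) ?_ ?_ ?_ ?_ ?_
  · rintro ⟨S, k⟩ hk
    exact mem_sigma.2 ⟨mem_univ _, succ_mem_leftMovable_moveRight (mem_sigma.1 hk).2⟩
  · rintro ⟨T, j⟩ hj
    exact mem_sigma.2 ⟨mem_univ _, pred_mem_rightMovable_moveLeft (mem_sigma.1 hj).2⟩
  · rintro ⟨S, k⟩ hk
    have hk := (mem_sigma.1 hk).2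
    exact Sigma.ext (moveLeft_moveRight hk)
      (heq_of_eq (pred_succ_of_not_isMax (not_isMax_of_mem_rightMovable hk)))
  · rintro ⟨T, j⟩ hj
    have hj := (mem_sigma.1 hj).2
    exact Sigma.ext (moveRight_moveLeft hj)
      (heq_of_eq (succ_pred_of_not_isMin (not_isMin_of_mem_leftMovable hj)))
  · rintro ⟨S, k⟩ hk
    simp only [moveLeft_moveRight (mem_sigma.1 hk).2]

lemma moveCount_eq_card (S T : Finset (Fin ℓ)) :
    moveCount S T = #{k ∈ rightMovable S | moveRight S k = T} := by
  classical
  rw [moveCount, rightMovable, filter_filter]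
  congr 1
  refine filter_congr fun k hkS => ⟨?_, ?_⟩
  · rintro ⟨hlt, hsk, rfl⟩
    have hsucc : succ k = ⟨k.val + 1, hlt⟩ :=
      Fin.ext (Fin.val_orderSucc_of_not_isMax (Fin.not_isMax_iff_val_add_one_lt.2 hlt))
    exact ⟨hsucc ▸ hsk, by rw [moveRight, hsucc]⟩
  · rintro ⟨hsk, rfl⟩
    have hmax : ¬IsMax k := fun h => hsk ((succ_eq_iff_isMax.2 h).symm ▸ hkS)
    have hsucc : succ k = ⟨k.val + 1, Fin.not_isMax_iff_val_add_one_lt.1 hmax⟩ :=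
      Fin.ext (Fin.val_orderSucc_of_not_isMax hmax)
    exact ⟨_, hsucc ▸ hsk, by rw [moveRight, hsucc]⟩

lemma MFull_apply (f : Finset (Fin ℓ) → ℂ) (T : Finset (Fin ℓ)) :
    MFull ℓ f T = ∑ j ∈ leftMovable T, f (moveLeft T j) := calc
  MFull ℓ f T = ∑ S, ∑ k ∈ rightMovable S, if moveRight S k = T then f S else 0 := by
    change ∑ S, (moveCount S T : ℂ) * f S = _
    simp [moveCount_eq_card, sum_ite, sum_const]
  _ = ∑ U, ∑ j ∈ leftMovable U, if U = T then f (moveLeft U j) else 0 :=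
    sum_sum_rightMovable fun S U => if U = T then f S else 0
  _ = ∑ j ∈ leftMovable T, f (moveLeft T j) := by
    rw [sum_eq_single T (fun U _ hU => sum_eq_zero fun j _ => if_neg hU) (by simp)]
    simp

lemma MFull_moveRight (f : Finset (Fin ℓ) → ℂ) (hk : k ∈ rightMovable T) :
    MFull ℓ f (moveRight T k) = f T +
      ∑ j ∈ (leftMovable (moveRight T k)).erase (succ k), f (moveLeft (moveRight T k) j) := by
  rw [MFull_apply, ← add_sum_erase _ _ (succ_mem_leftMovable_moveRight hk), moveLeft_moveRight hk]

noncomputable def lowerOp (f : Finset (Fin ℓ) → ℂ) (S : Finset (Fin ℓ)) : ℂ :=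
  ∑ k ∈ rightMovable S, (lowerCoeff ℓ (k.val + 1) : ℂ) * f (moveRight S k)

lemma lowerOp_conj (f : Finset (Fin ℓ) → ℂ) (S : Finset (Fin ℓ)) :
    lowerOp (fun U => conj (f U)) S = conj (lowerOp f S) := by
  simp [lowerOp, map_sum]

lemma lowerOp_moveLeft (f : Finset (Fin ℓ) → ℂ) (hj : j ∈ leftMovable T) :
    lowerOp f (moveLeft T j) = (lowerCoeff ℓ j : ℂ) * f T +
      ∑ k ∈ (rightMovable (moveLeft T j)).erase (pred j),
        (lowerCoeff ℓ (k.val + 1) : ℂ) * f (moveRight (moveLeft T j) k) := by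
  rw [lowerOp, ← add_sum_erase _ _ (pred_mem_rightMovable_moveLeft hj), moveRight_moveLeft hj,
    Fin.val_orderPred_of_not_isMin (not_isMin_of_mem_leftMovable hj)]

lemma sum_configNormSq_lowerOp_mul (φ ψ : Finset (Fin ℓ) → ℂ) :
    ∑ S, (configNormSq S : ℂ) * lowerOp φ S * ψ S =
      ∑ T, (configNormSq T : ℂ) * φ T * MFull ℓ ψ T := by
  have hS (S : Finset (Fin ℓ)) : (configNormSq S : ℂ) * lowerOp φ S * ψ S =
      ∑ k ∈ rightMovable S,
        (configNormSq (moveRight S k) : ℂ) * φ (moveRight S k) * ψ S := by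
    rw [lowerOp, mul_sum, sum_mul]
    refine sum_congr rfl fun k hk => ?_
    rw [configNormSq_moveRight hk]
    push_cast
    ring
  simp only [hS, MFull_apply, mul_sum]
  exact sum_sum_rightMovable fun S U => (configNormSq U : ℂ) * φ U * ψ S

/-- The eigenvalue of `[M, F]` on the configuration `T`. -/
noncomputable def cartanEigenvalue (T : Finset (Fin ℓ)) : ℝ :=
  ∑ j ∈ T, (lowerCoeff ℓ j - lowerCoeff ℓ (j + 1))

lemma not_isMin_of_lowerCoeff_ne_zero (h : lowerCoeff ℓ j ≠ 0) : ¬IsMin j :=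
  Fin.not_isMin_iff_val_pos.2 <| Nat.pos_of_ne_zero fun h0 => h (by simp [lowerCoeff, h0])

lemma not_isMax_of_lowerCoeff_ne_zero (h : lowerCoeff ℓ (k + 1) ≠ 0) : ¬IsMax k :=
  Fin.not_isMax_iff_val_add_one_lt.2 <|
    lt_of_le_of_ne k.isLt fun hℓ => h (by simp [lowerCoeff, hℓ])

/-- Pairs of neighbouring occupied sites contribute equally to both sums. -/
lemma sum_leftMovable_sub_sum_rightMovable (T : Finset (Fin ℓ)) :
    ∑ j ∈ leftMovable T, lowerCoeff ℓ j - ∑ k ∈ rightMovable T, lowerCoeff ℓ (k + 1) =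
      cartanEigenvalue T := by
  have hpairs : ∑ j ∈ T with pred j ∈ T, lowerCoeff ℓ j =
      ∑ k ∈ T with succ k ∈ T, lowerCoeff ℓ (k + 1) := by
    refine sum_bij_ne_zero (fun j _ _ => pred j) ?_ ?_ ?_ ?_
    · intro j hj hw
      rw [mem_filter, succ_pred_of_not_isMin (not_isMin_of_lowerCoeff_ne_zero hw)]
      exact (mem_filter.1 hj).symm
    · intro j₁ _ hw₁ j₂ _ hw₂ h
      rw [← succ_pred_of_not_isMin (not_isMin_of_lowerCoeff_ne_zero hw₁), h,
        succ_pred_of_not_isMin (not_isMin_of_lowerCoeff_ne_zero hw₂)]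
    · intro k hk hw
      have hmax := not_isMax_of_lowerCoeff_ne_zero hw
      refine ⟨succ k, ?_, ?_, pred_succ_of_not_isMax hmax⟩
      · rw [mem_filter, pred_succ_of_not_isMax hmax]; exact (mem_filter.1 hk).symm
      · rwa [Fin.val_orderSucc_of_not_isMax hmax]
    · intro j _ hw
      rw [Fin.val_orderPred_of_not_isMin (not_isMin_of_lowerCoeff_ne_zero hw)]
  rw [cartanEigenvalue, sum_sub_distrib, ← sum_filter_not_add_sum_filter T (pred · ∈ T),
    ← sum_filter_not_add_sum_filter T (fun k => succ k ∈ T) (fun k => lowerCoeff ℓ (k + 1)),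
    hpairs]
  simp only [leftMovable, rightMovable]
  ring

lemma cartanEigenvalue_eq {m r : ℕ} (hcard : #T = m)
    (hsum : ∑ k ∈ T, (k.val + 1) = r + m * (m + 1) / 2) :
    cartanEigenvalue T = 2 * r + m * m - m * ℓ := by
  have hsumR : 2 * ∑ k ∈ T, ((k.val : ℝ) + 1) = 2 * r + m * (m + 1) := by
    have := Nat.div_mul_cancel (Nat.even_mul_succ_self m).two_dvd
    exact_mod_cast (by omega : 2 * ∑ k ∈ T, (k.val + 1) = 2 * r + m * (m + 1))
  calc cartanEigenvalue T = ∑ k ∈ T, (2 * ((k.val : ℝ) + 1) - (ℓ + 1)) :=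
        sum_congr rfl fun k _ => by simp only [lowerCoeff]; push_cast; ring
    _ = 2 * r + m * m - m * ℓ := by
        rw [sum_sub_distrib, ← mul_sum, hsumR, sum_const, hcard, nsmul_eq_mul]; ring

/-- Both sides say that `j ≠ k` can be moved in `T`, left and right, and that
`succ k ∉ {j, pred j}`. -/
lemma mem_leftMovable_and_mem_rightMovable_moveLeft_iff :
    j ∈ leftMovable T ∧ k ∈ (rightMovable (moveLeft T j)).erase (pred j) ↔
      j ∈ (leftMovable (moveRight T k)).erase (succ k) ∧ k ∈ rightMovable T := by
  simp only [mem_leftMovable, mem_rightMovable, mem_erase, moveLeft, moveRight, mem_insert]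
  grind [succ_eq_iff_isMax, pred_eq_iff_isMin, pred_succ_of_not_isMax, succ_pred_of_not_isMin]

lemma moveRight_moveLeft_comm (hj : j ∈ leftMovable T)
    (hk : k ∈ (rightMovable (moveLeft T j)).erase (pred j)) :
    moveRight (moveLeft T j) k = moveLeft (moveRight T k) j := by
  have := mem_leftMovable_and_mem_rightMovable_moveLeft_iff.1 ⟨hj, hk⟩
  simp only [mem_leftMovable, mem_rightMovable, mem_erase, moveLeft, moveRight, mem_insert] at *
  ext x
  simp only [mem_insert, mem_erase]
  grind

/-- Off the diagonal `MF` and `FM` agree, because moves of different particles commute. -/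
lemma MFull_lowerOp_apply (f : Finset (Fin ℓ) → ℂ) (T : Finset (Fin ℓ)) :
    MFull ℓ (lowerOp f) T = lowerOp (MFull ℓ f) T + (cartanEigenvalue T : ℂ) * f T := by
  have hdiag := congrArg (fun x : ℝ => (x : ℂ) * f T) (sum_leftMovable_sub_sum_rightMovable T)
  have hoff : ∑ j ∈ leftMovable T, ∑ k ∈ (rightMovable (moveLeft T j)).erase (pred j),
        (lowerCoeff ℓ (k.val + 1) : ℂ) * f (moveRight (moveLeft T j) k) =
      ∑ k ∈ rightMovable T, ∑ j ∈ (leftMovable (moveRight T k)).erase (succ k),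
        (lowerCoeff ℓ (k.val + 1) : ℂ) * f (moveLeft (moveRight T k) j) := by
    rw [← sum_comm' fun _ _ => mem_leftMovable_and_mem_rightMovable_moveLeft_iff]
    exact sum_congr rfl fun j hj => sum_congr rfl fun k hk => by
      rw [moveRight_moveLeft_comm hj hk]
  have hright : lowerOp (MFull ℓ f) T =
      ∑ k ∈ rightMovable T, (lowerCoeff ℓ (k.val + 1) : ℂ) * f T +
      ∑ k ∈ rightMovable T, ∑ j ∈ (leftMovable (moveRight T k)).erase (succ k),
        (lowerCoeff ℓ (k.val + 1) : ℂ) * f (moveLeft (moveRight T k) j) := by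
    rw [lowerOp, ← sum_add_distrib]
    exact sum_congr rfl fun k hk => by rw [MFull_moveRight f hk, mul_add, mul_sum]
  rw [MFull_apply, sum_congr rfl fun j hj => lowerOp_moveLeft f hj, sum_add_distrib, hoff, hright]
  push_cast at hdiag
  rw [← sum_mul, ← sum_mul]
  linear_combination hdiag

lemma sum_configNormSq_mul_normSq_lowerOp {f : Finset (Fin ℓ) → ℂ} (hf : MFull ℓ f = 0) :
    ∑ S, configNormSq S * Complex.normSq (lowerOp f S) =
      ∑ T, cartanEigenvalue T * (configNormSq T * Complex.normSq (f T)) := by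
  apply Complex.ofReal_injective
  push_cast
  calc ∑ S, (configNormSq S : ℂ) * Complex.normSq (lowerOp f S)
      = ∑ S, (configNormSq S : ℂ) * lowerOp (fun U => conj (f U)) S * lowerOp f S := by
        simp only [lowerOp_conj, Complex.normSq_eq_conj_mul_self, mul_assoc]
    _ = ∑ T, (configNormSq T : ℂ) * conj (f T) * MFull ℓ (lowerOp f) T :=
        sum_configNormSq_lowerOp_mul _ _
    _ = ∑ T, (cartanEigenvalue T : ℂ) * (configNormSq T * Complex.normSq (f T)) := by
        refine sum_congr rfl fun T _ => ?_
        rw [MFull_lowerOp_apply, hf, Complex.normSq_eq_conj_mul_self]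
        simp only [lowerOp, Pi.zero_apply, mul_zero, sum_const_zero]
        ring

end FermionShift

open FermionShift

/-- the restriction `M_{ℓ,m}^r : V_{ℓ,m}^r → V_{ℓ,m}^{r+1}` of the
shift map is injective whenever `r ≤ ⌊(m(ℓ-m)-1)/2⌋`, i.e. `2r + 1 ≤ m(ℓ-m)`. -/
theorem shift_injective_on_low_weight (ℓ m r : ℕ) (hm : m ≤ ℓ)
    (hr : 2 * r + 1 ≤ m * (ℓ - m)) :
    ∀ f ∈ Vw ℓ m r, MFull ℓ f = 0 → f = 0 := by
  intro f hf hMf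
  have hneg (T : Finset (Fin ℓ)) (hT : f T ≠ 0) : cartanEigenvalue T < 0 := by
    obtain ⟨hcard, hsum⟩ := hf T hT
    have hrR : ((2 * r + 1 : ℕ) : ℝ) ≤ ((m * (ℓ - m) : ℕ) : ℝ) := Nat.cast_le.2 hr
    push_cast [Nat.cast_sub hm] at hrR
    rw [cartanEigenvalue_eq hcard hsum]
    linarith
  have hnonneg (T : Finset (Fin ℓ)) : 0 ≤ configNormSq T * Complex.normSq (f T) :=
    mul_nonneg (configNormSq_pos T).le (Complex.normSq_nonneg _)
  have henergy : 0 ≤ ∑ T, cartanEigenvalue T * (configNormSq T * Complex.normSq (f T)) :=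
    sum_configNormSq_mul_normSq_lowerOp hMf ▸
      sum_nonneg fun S _ => mul_nonneg (configNormSq_pos S).le (Complex.normSq_nonneg _)
  funext T
  by_contra hT
  have hzero := eq_zero_of_sum_mul_nonneg (fun T _ => hnonneg T)
    (fun T _ hq => hneg T fun h => hq (by simp [h])) henergy (mem_univ T)
  exact (mul_pos (configNormSq_pos T) (Complex.normSq_pos.2 hT)).ne' hzero
end

section
/- The nilpotent shift map M_{ℓ,m}^r : V_{ℓ,m}^r → V_{ℓ,m}^{r+1} is surjective whenever r ≥ ⌊m(ℓ-m)/2⌋. -/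
open Finset

/-!
With `ℓ = n + 1`, the shift `M` is the raising operator of an `sl₂`-triple: the lowering operator
`F` moves a particle from site `i + 1` back to site `i` with weight `(i + 1)(n - i)`, and the
commutator `[M, F]` acts on `V^s` by the scalar `2s - m(ℓ - m)`, whose value `t` at
`s = r + 1` is positive. If `M F v = 0` for some `v ∈ V^{r+1}`, this gives
`F M^{k+1} v = -(k + 1)(t + k) M^k v`, so `M^k v ≠ 0` for all `k` unless `v = 0`; as `M`
raises the weight, `M^k v` vanishes for large `k`. Hence `M F` is injective, so bijective, on the finite-dimensional `V^{r+1}`,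
and `M` maps `F(V^{r+1}) ⊆ V^r` onto `V^{r+1}`.
-/

section RaisingLowering

variable {K V : Type*} [AddCommGroup V]

lemma lowering_pow_succ_apply [CommRing K] [Module K V] {E F : Module.End K V} {v : V} {t : K}
    (hcomm : ∀ k : ℕ, F (E ((E ^ k) v)) = E (F ((E ^ k) v)) - (t + 2 * k) • (E ^ k) v)
    (hv : E (F v) = 0) (k : ℕ) :
    F ((E ^ (k + 1)) v) = -((k + 1) * (t + k)) • (E ^ k) v := by
  induction k with
  | zero => simpa [hv, neg_smul] using hcomm 0
  | succ k ih =>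
    rw [pow_succ', Module.End.mul_apply, hcomm, ih, map_smul, ← Module.End.mul_apply, ← pow_succ',
      ← sub_smul]
    congr 1
    push_cast
    ring

lemma eq_zero_of_raising_lowering_eq_zero [Field K] [CharZero K] [Module K V]
    {E F : Module.End K V} {v : V} {t : K} {N : ℕ}
    (hcomm : ∀ k : ℕ, F (E ((E ^ k) v)) = E (F ((E ^ k) v)) - (t + 2 * k) • (E ^ k) v)
    (ht : ∀ k : ℕ, t + k ≠ 0) (hN : (E ^ N) v = 0) (hv : E (F v) = 0) : v = 0 := by
  have step (k : ℕ) (hk : (E ^ (k + 1)) v = 0) : (E ^ k) v = 0 := by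
    have := lowering_pow_succ_apply hcomm hv k
    rw [hk, map_zero, eq_comm, smul_eq_zero] at this
    exact this.resolve_left (neg_ne_zero.mpr (mul_ne_zero (Nat.cast_add_one_ne_zero k) (ht k)))
  induction N with
  | zero => simpa using hN
  | succ N ih => exact ih (step N hN)

lemma surjOn_of_ker_comp_trivial [Field K] [Module K V] {E F : Module.End K V}
    {W W' : Submodule K V} [FiniteDimensional K W] (hE : Set.MapsTo E W' W)
    (hF : Set.MapsTo F W W') (hEF : ∀ v ∈ W, E (F v) = 0 → v = 0) : Set.SurjOn E W' W := by
  let Φ : Module.End K W := (E ∘ₗ F).restrict (hE.comp hF)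
  have hΦ : Function.Injective Φ := by
    rw [injective_iff_map_eq_zero]
    exact fun w hw => Subtype.ext (hEF w w.2 (congrArg Subtype.val hw))
  intro w hw
  obtain ⟨u, hu⟩ := LinearMap.injective_iff_surjective.mp hΦ ⟨w, hw⟩
  exact ⟨F u, hF u.2, congrArg Subtype.val hu⟩

end RaisingLowering

lemma Finset.eq_insert_erase_iff_eq_insert_erase {α : Type*} [DecidableEq α] {a b : α}
    (hab : a ≠ b) {S T : Finset α} :
    (a ∈ S ∧ b ∉ S ∧ T = insert b (S.erase a)) ↔ (b ∈ T ∧ a ∉ T ∧ S = insert a (T.erase b)) := by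
  constructor
  · rintro ⟨ha, hb, rfl⟩
    refine ⟨mem_insert_self _ _, by simp [hab], ?_⟩
    ext x; grind
  · rintro ⟨hb, ha, rfl⟩
    refine ⟨mem_insert_self _ _, by simp [hab.symm], ?_⟩
    ext x; grind

lemma eq_zero_of_mem_Vw {ℓ m s : ℕ} {f : Finset (Fin ℓ) → ℂ} (hs : ℓ * ℓ < s)
    (hf : f ∈ Vw ℓ m s) : f = 0 := by
  funext T
  by_contra hT
  obtain ⟨hcard, hsum⟩ := hf T hT
  have hle : ∑ k ∈ T, (k.val + 1) ≤ T.card * ℓ := by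
    simpa using sum_le_card_nsmul T (fun k : Fin ℓ => k.val + 1) ℓ fun k _ => k.isLt
  have hcard_le : T.card * ℓ ≤ ℓ * ℓ := Nat.mul_le_mul_right ℓ (by simpa using card_le_univ T)
  omega

section Hop

variable {ℓ : ℕ}

/-- On the basis vector of a configuration, `hop a b` moves a particle from `a` to `b`. -/
noncomputable def hop (a b : Fin ℓ) : Module.End ℂ (Finset (Fin ℓ) → ℂ) :=
  LinearMap.pi fun T => if b ∈ T ∧ a ∉ T then LinearMap.proj (insert a (T.erase b)) else 0

lemma hop_apply (a b : Fin ℓ) (f : Finset (Fin ℓ) → ℂ) (T : Finset (Fin ℓ)) :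
    hop a b f T = if b ∈ T ∧ a ∉ T then f (insert a (T.erase b)) else 0 := by
  unfold hop; split_ifs <;> simp [*]

lemma hop_commute {a b c d : Fin ℓ} (had : a ≠ d) (hbc : b ≠ c) :
    Commute (hop a b) (hop c d) := by
  refine LinearMap.ext fun f => funext fun T => ?_
  simp only [Module.End.mul_apply, hop_apply]
  split_ifs <;> first | rfl | (congr 1; ext x; grind) | grind

lemma hop_hop_apply {a b : Fin ℓ} (hab : a ≠ b) (f : Finset (Fin ℓ) → ℂ) (T : Finset (Fin ℓ)) :
    hop a b (hop b a f) T = if b ∈ T ∧ a ∉ T then f T else 0 := by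
  simp only [hop_apply]
  split_ifs <;> first | rfl | (congr 1; ext x; grind) | grind

lemma hop_mem_Vw {a b : Fin ℓ} {m s s' : ℕ} {f : Finset (Fin ℓ) → ℂ} (hf : f ∈ Vw ℓ m s)
    (hs : s' + a = s + b) : hop a b f ∈ Vw ℓ m s' := by
  intro T hT
  rw [hop_apply] at hT
  split_ifs at hT with hT'
  · obtain ⟨hbT, haT⟩ := hT'
    have haE : a ∉ T.erase b := fun h => haT (mem_of_mem_erase h)
    obtain ⟨hcard, hsum⟩ := hf _ hT
    rw [card_insert_of_notMem haE, card_erase_of_mem hbT] at hcard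
    rw [sum_insert haE] at hsum
    have := sum_erase_add T (fun k : Fin ℓ => k.val + 1) hbT
    have := card_pos.mpr ⟨b, hbT⟩
    omega
  · exact absurd rfl hT

end Hop

section Chain

variable {n : ℕ}

lemma moveCount_eq_sum (S T : Finset (Fin (n + 1))) :
    moveCount S T = ∑ i : Fin n,
      if i.castSucc ∈ S ∧ i.succ ∉ S ∧ T = insert i.succ (S.erase i.castSucc) then 1 else 0 := by
  classical
  rw [moveCount, card_filter, ← sum_ite_mem_eq, Fin.sum_univ_castSucc]
  have succ_eq (i : Fin n) (h) : (⟨i.val + 1, h⟩ : Fin (n + 1)) = i.succ := rfl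
  simp [ite_and, succ_eq]

lemma MFull_eq_sum_hop : MFull (n + 1) = ∑ i : Fin n, hop i.castSucc i.succ := by
  refine LinearMap.ext fun f => funext fun T => ?_
  simp only [MFull, LinearMap.coe_mk, AddHom.coe_mk, LinearMap.sum_apply, Finset.sum_apply,
    moveCount_eq_sum, Nat.cast_sum, sum_mul, Nat.cast_ite, Nat.cast_one, Nat.cast_zero, ite_mul,
    one_mul, zero_mul]
  rw [sum_comm]
  refine sum_congr rfl fun i _ => ?_
  simp_rw [Finset.eq_insert_erase_iff_eq_insert_erase (Fin.castSucc_lt_succ (i := i)).ne,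
    hop_apply, ← and_assoc, ite_and]
  split_ifs <;> simp

/-- The coefficients `(i + 1)(n - i)` are those of the lowering operator of the irreducible
`sl₂`-module `ℂ^{n+1}`. -/
noncomputable def lowering (n : ℕ) : Module.End ℂ (Finset (Fin (n + 1)) → ℂ) :=
  ∑ i : Fin n, (((i : ℂ) + 1) * (n - i)) • hop i.succ i.castSucc

lemma MFull_mem_Vw {m s : ℕ} {f : Finset (Fin (n + 1)) → ℂ} (hf : f ∈ Vw (n + 1) m s) :
    MFull (n + 1) f ∈ Vw (n + 1) m (s + 1) := by
  rw [MFull_eq_sum_hop, LinearMap.sum_apply]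
  exact Submodule.sum_mem _ fun i _ => hop_mem_Vw hf (by simp; omega)

lemma MFull_pow_apply_mem_Vw {m s : ℕ} {f : Finset (Fin (n + 1)) → ℂ} (hf : f ∈ Vw (n + 1) m s)
    (k : ℕ) : (MFull (n + 1) ^ k) f ∈ Vw (n + 1) m (s + k) := by
  induction k with
  | zero => simpa using hf
  | succ k ih => rw [pow_succ', Module.End.mul_apply, ← add_assoc]; exact MFull_mem_Vw ih

lemma lowering_mem_Vw {m s : ℕ} {f : Finset (Fin (n + 1)) → ℂ}
    (hf : f ∈ Vw (n + 1) m (s + 1)) : lowering n f ∈ Vw (n + 1) m s := by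
  rw [lowering, LinearMap.sum_apply]
  exact Submodule.sum_mem _ fun i _ => Submodule.smul_mem _ _ (hop_mem_Vw hf (by simp; omega))

lemma MFull_mul_hop_sub (i : Fin n) :
    MFull (n + 1) * hop i.succ i.castSucc - hop i.succ i.castSucc * MFull (n + 1) =
      hop i.castSucc i.succ * hop i.succ i.castSucc -
        hop i.succ i.castSucc * hop i.castSucc i.succ := by
  rw [MFull_eq_sum_hop, sum_mul, mul_sum, ← sum_sub_distrib, sum_eq_single i]
  · intro j _ hji
    rw [(hop_commute ((Fin.castSucc_injective n).ne hji) ((Fin.succ_injective n).ne hji)).eq,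
      sub_self]
  · simp

lemma MFull_mul_lowering_sub :
    MFull (n + 1) * lowering n - lowering n * MFull (n + 1) =
      ∑ i : Fin n, (((i : ℂ) + 1) * (n - i)) •
        (hop i.castSucc i.succ * hop i.succ i.castSucc -
          hop i.succ i.castSucc * hop i.castSucc i.succ) := by
  simp only [lowering, mul_sum, sum_mul, mul_smul_comm, smul_mul_assoc, ← sum_sub_distrib]
  exact sum_congr rfl fun i _ => by rw [← MFull_mul_hop_sub, smul_sub]

lemma sum_mul_succ_mem_sub_castSucc_mem (T : Finset (Fin (n + 1))) :
    ∑ i : Fin n, ((i : ℂ) + 1) * (n - i) *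
        ((if i.succ ∈ T then 1 else 0) - (if i.castSucc ∈ T then 1 else 0)) =
      ∑ k ∈ T, (2 * (k : ℂ) - n) := by
  have h_succ : ∑ k ∈ T, (k : ℂ) * (n + 1 - k) =
      ∑ i : Fin n, ((i : ℂ) + 1) * (n - i) * (if i.succ ∈ T then 1 else 0) := by
    rw [← sum_ite_mem_eq, Fin.sum_univ_succ]
    simp
  have h_castSucc : ∑ k ∈ T, ((k : ℂ) + 1) * (n - k) =
      ∑ i : Fin n, ((i : ℂ) + 1) * (n - i) * (if i.castSucc ∈ T then 1 else 0) := by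
    rw [← sum_ite_mem_eq, Fin.sum_univ_castSucc]
    simp
  rw [sum_congr rfl fun i _ => mul_sub _ _ _, sum_sub_distrib, ← h_succ, ← h_castSucc,
    ← sum_sub_distrib]
  exact sum_congr rfl fun k _ => by ring

lemma MFull_lowering_sub_apply (f : Finset (Fin (n + 1)) → ℂ) (T : Finset (Fin (n + 1))) :
    MFull (n + 1) (lowering n f) T - lowering n (MFull (n + 1) f) T =
      (∑ k ∈ T, (2 * (k : ℂ) - n)) * f T := by
  have := congrArg (fun E => E f T) MFull_mul_lowering_sub
  simp only [LinearMap.sub_apply, Module.End.mul_apply, Pi.sub_apply] at this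
  rw [this, ← sum_mul_succ_mem_sub_castSucc_mem, sum_mul]
  simp only [LinearMap.sum_apply, Finset.sum_apply, LinearMap.smul_apply, Pi.smul_apply,
    LinearMap.sub_apply, Pi.sub_apply, Module.End.mul_apply, smul_eq_mul,
    hop_hop_apply (Fin.castSucc_lt_succ (i := _)).ne,
    hop_hop_apply (Fin.castSucc_lt_succ (i := _)).ne']
  refine sum_congr rfl fun i _ => ?_
  split_ifs <;> simp_all

lemma lowering_MFull_of_mem_Vw {m s : ℕ} {f : Finset (Fin (n + 1)) → ℂ}
    (hf : f ∈ Vw (n + 1) m s) :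
    lowering n (MFull (n + 1) f) =
      MFull (n + 1) (lowering n f) - (2 * s + m * m - m * (n + 1) : ℂ) • f := by
  funext T
  rw [Pi.sub_apply, Pi.smul_apply, smul_eq_mul, eq_sub_iff_add_eq, ← eq_sub_iff_add_eq',
    MFull_lowering_sub_apply]
  by_cases hT : f T = 0
  · simp [hT]
  obtain ⟨hcard, hsum⟩ := hf T hT
  have hsum' : ∑ k ∈ T, (2 * (k : ℂ) - n) =
      2 * ((∑ k ∈ T, (k.val + 1) : ℕ) : ℂ) - (n + 2) * T.card := by
    push_cast
    simp only [sum_sub_distrib, sum_add_distrib, sum_const, nsmul_eq_mul, mul_sum, mul_add, mul_one]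
    ring
  have hdiv : 2 * ((m * (m + 1) / 2 : ℕ) : ℂ) = m * (m + 1) := by
    exact_mod_cast Nat.two_mul_div_two_of_even (Nat.even_mul_succ_self m)
  rw [hsum', hsum, hcard]
  push_cast
  linear_combination -f T * hdiv

end Chain

/-- the restriction `M_{ℓ,m}^r : V_{ℓ,m}^r → V_{ℓ,m}^{r+1}` of the
shift map is surjective whenever `r ≥ ⌊m(ℓ-m)/2⌋`. -/
theorem shift_surjective_on_high_weight (ℓ m r : ℕ) (hm : m ≤ ℓ)
    (hr : m * (ℓ - m) / 2 ≤ r) :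
    ∀ g ∈ Vw ℓ m (r + 1), ∃ f ∈ Vw ℓ m r, MFull ℓ f = g := by
  obtain _ | n := ℓ
  · intro g hg
    exact ⟨0, zero_mem _, by rw [map_zero, eq_zero_of_mem_Vw (by omega) hg]⟩
  have hweight : m * (n + 1) ≤ 2 * r + 1 + m * m := by
    have : m * (n + 1 - m) + m * m = m * (n + 1) := by rw [← Nat.mul_add, Nat.sub_add_cancel hm]
    omega
  refine surjOn_of_ker_comp_trivial (fun _ => MFull_mem_Vw) (fun _ => lowering_mem_Vw)
    fun v hv hv0 => eq_zero_of_raising_lowering_eq_zero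
      (t := (2 * (r + 1) + m * m - m * (n + 1) : ℂ)) (fun k => ?_) (fun k => ?_)
      (eq_zero_of_mem_Vw (by omega) (MFull_pow_apply_mem_Vw hv ((n + 1) * (n + 1)))) hv0
  · rw [lowering_MFull_of_mem_Vw (MFull_pow_apply_mem_Vw hv k)]
    congr 2
    push_cast
    ring
  · have : (0 : ℤ) < 2 * (r + 1) + m * m - m * (n + 1) + k := by
      zify at hweight
      linarith
    exact_mod_cast this.ne'
end

section
/- The operator M_{ℓ,m} is nilpotent: (M_{ℓ,m})^{m(ℓ-m)+1} = 0, and (M_{ℓ,m})^{m(ℓ-m)} ≠ 0 (for 0 < m < ℓ it maps the minimal configuration {1,…,m} to a positive multiple of the maximal configuration {ℓ-m+1,…,ℓ}). -/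
open Finset

/-- The nilpotent shift operator `M_{ℓ,m}` on the space `V_{ℓ,m}` spanned by the
`m`-particle configurations on `ℓ` sites (size-`m` subsets of the sites):
a configuration is sent to the sum of all configurations obtained by moving one
particle one site to the right. -/
noncomputable def Mlm (ℓ m : ℕ) :
    ({S : Finset (Fin ℓ) // S.card = m} → ℂ) →ₗ[ℂ]
      ({S : Finset (Fin ℓ) // S.card = m} → ℂ) where
  toFun f := fun T => ∑ S : {S : Finset (Fin ℓ) // S.card = m},
    (moveCount S.1 T.1 : ℂ) * f S
  map_add' f g := by
    funext T
    simp [Pi.add_apply, mul_add, Finset.sum_add_distrib]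
  map_smul' c f := by
    funext T
    simp only [Pi.smul_apply, smul_eq_mul, RingHom.id_apply, Finset.mul_sum]
    exact Finset.sum_congr rfl fun S _ => by ring

/-! Give a configuration `S` the weight `∑ k ∈ S, k`. A move raises the weight by exactly one, and
on `m`-element configurations the weight lies between `m.choose 2` (the initial segment) and
`m.choose 2 + m * (ℓ - m)`, which only the final segment attains; hence
`M ^ (m * (ℓ - m) + 1) = 0`. Conversely, `M` has entries in `ℕ` and every configuration other than
the final segment admits a move, so `M ^ n` keeps the initial segment's vector nonzero at some
configuration of weight `m.choose 2 + n`; for `n = m * (ℓ - m)` the only such configuration is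
the final segment. -/

namespace Finset

theorem choose_card_two_le_sum_id (s : Finset ℕ) : (#s).choose 2 ≤ ∑ i ∈ s, i := by
  induction s using Finset.induction_on_max with
  | empty => simp
  | insert a t hlt ih =>
    have ha : a ∉ t := fun h => lt_irrefl a (hlt a h)
    have hcard : #t ≤ a := by
      simpa using card_le_card (fun x hx => mem_range.2 (hlt x hx) : t ⊆ range a)
    rw [card_insert_of_notMem ha, sum_insert ha, Nat.choose_succ_succ' _ 1, Nat.choose_one_right,
      one_add_one_eq_two]
    omega

theorem sum_id_le_choose_card_two_add {ℓ : ℕ} (s : Finset ℕ) (hs : s ⊆ range ℓ) :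
    ∑ i ∈ s, i ≤ (#s).choose 2 + #s * (ℓ - #s) := by
  induction s using Finset.induction_on_min with
  | empty => simp
  | insert a t hlt ih =>
    have ha : a ∉ t := fun h => lt_irrefl a (hlt a h)
    have hat : t ⊆ Ioo a ℓ := fun x hx =>
      mem_Ioo.2 ⟨hlt x hx, mem_range.1 (hs (mem_insert_of_mem hx))⟩
    have hcard : #t + a + 1 ≤ ℓ := by
      have ht : #t ≤ ℓ - a - 1 := (card_le_card hat).trans_eq (Nat.card_Ioo a ℓ)
      have haℓ : a < ℓ := mem_range.1 (hs (mem_insert_self a t))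
      omega
    obtain ⟨p, rfl⟩ := Nat.exists_eq_add_of_le hcard
    have ih := ih ((subset_insert a t).trans hs)
    rw [card_insert_of_notMem ha, sum_insert ha, Nat.choose_succ_succ' _ 1, Nat.choose_one_right,
      one_add_one_eq_two]
    rw [show #t + a + 1 + p - #t = a + 1 + p by omega] at ih
    rw [show #t + a + 1 + p - (#t + 1) = a + p by omega]
    nlinarith

end Finset

theorem Nat.exists_lt_and_not_succ {p : ℕ → Prop} {k j : ℕ} (hkj : k ≤ j) (hk : p k) (hj : ¬p j) :
    ∃ i < j, p i ∧ ¬p (i + 1) := by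
  induction j, hkj using Nat.le_induction with
  | base => exact absurd hk hj
  | succ j _ ih =>
    by_cases hpj : p j
    · exact ⟨j, j.lt_succ_self, hpj, hj⟩
    · obtain ⟨i, hij, hi⟩ := ih hpj
      exact ⟨i, hij.trans j.lt_succ_self, hi⟩

abbrev Config (ℓ m : ℕ) := {S : Finset (Fin ℓ) // #S = m}

section Sites

variable {ℓ m : ℕ}

def weight (S : Finset (Fin ℓ)) : ℕ := ∑ k ∈ S, (k : ℕ)

lemma weight_eq_sum_map (S : Finset (Fin ℓ)) : weight S = ∑ i ∈ S.map Fin.valEmbedding, i :=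
  (sum_map S Fin.valEmbedding id).symm

lemma choose_card_two_le_weight (S : Finset (Fin ℓ)) : (#S).choose 2 ≤ weight S := by
  simpa [weight_eq_sum_map] using choose_card_two_le_sum_id (S.map Fin.valEmbedding)

lemma weight_le_choose_card_two_add (S : Finset (Fin ℓ)) :
    weight S ≤ (#S).choose 2 + #S * (ℓ - #S) := by
  have hS : S.map Fin.valEmbedding ⊆ range ℓ := fun i hi => by
    obtain ⟨k, -, rfl⟩ := mem_map.1 hi
    exact mem_range.2 k.2
  simpa [weight_eq_sum_map] using sum_id_le_choose_card_two_add _ hS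

def moveRight (S : Finset (Fin ℓ)) (k : Fin ℓ) (h : k.val + 1 < ℓ) : Finset (Fin ℓ) :=
  insert ⟨k.val + 1, h⟩ (S.erase k)

lemma moveCount_ne_zero_iff {S T : Finset (Fin ℓ)} :
    moveCount S T ≠ 0 ↔
      ∃ k ∈ S, ∃ h : k.val + 1 < ℓ, ⟨k.val + 1, h⟩ ∉ S ∧ T = moveRight S k h := by
  simp [moveCount, moveRight]

lemma card_moveRight {S : Finset (Fin ℓ)} {k : Fin ℓ} {h : k.val + 1 < ℓ} (hk : k ∈ S)
    (hk' : ⟨k.val + 1, h⟩ ∉ S) : #(moveRight S k h) = #S := by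
  rw [moveRight, card_insert_of_notMem fun h' => hk' (mem_of_mem_erase h'),
    card_erase_add_one hk]

lemma weight_moveRight {S : Finset (Fin ℓ)} {k : Fin ℓ} {h : k.val + 1 < ℓ} (hk : k ∈ S)
    (hk' : ⟨k.val + 1, h⟩ ∉ S) : weight (moveRight S k h) = weight S + 1 := by
  rw [weight, moveRight, sum_insert fun h' => hk' (mem_of_mem_erase h'), weight,
    ← add_sum_erase S _ hk]
  dsimp only
  omega

def lowSites (ℓ m : ℕ) : Finset (Fin ℓ) := {k | k.val < m}

def highSites (ℓ m : ℕ) : Finset (Fin ℓ) := {k | ℓ - m ≤ k.val}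

lemma map_lowSites (hm : m ≤ ℓ) : (lowSites ℓ m).map Fin.valEmbedding = range m := by
  ext i
  simp only [lowSites, mem_map, mem_filter, mem_univ, true_and, Fin.valEmbedding_apply, mem_range]
  exact ⟨fun ⟨k, hk, hki⟩ => hki ▸ hk, fun hi => ⟨⟨i, by omega⟩, hi, rfl⟩⟩

lemma map_highSites : (highSites ℓ m).map Fin.valEmbedding = Ico (ℓ - m) ℓ := by
  ext i
  simp only [highSites, mem_map, mem_filter, mem_univ, true_and, Fin.valEmbedding_apply, mem_Ico]
  exact ⟨fun ⟨k, hk, hki⟩ => hki ▸ ⟨hk, k.2⟩, fun hi => ⟨⟨i, hi.2⟩, hi.1, rfl⟩⟩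

lemma card_lowSites (hm : m ≤ ℓ) : #(lowSites ℓ m) = m := by
  rw [← card_map Fin.valEmbedding, map_lowSites hm, card_range]

lemma card_highSites (hm : m ≤ ℓ) : #(highSites ℓ m) = m := by
  rw [← card_map Fin.valEmbedding, map_highSites, Nat.card_Ico]
  omega

lemma weight_lowSites (hm : m ≤ ℓ) : weight (lowSites ℓ m) = m.choose 2 := by
  rw [weight_eq_sum_map, map_lowSites hm, sum_range_id, Nat.choose_two_right]

lemma weight_highSites (hm : m ≤ ℓ) : weight (highSites ℓ m) = m.choose 2 + m * (ℓ - m) := by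
  rw [weight_eq_sum_map, map_highSites, sum_Ico_eq_sum_range, Nat.sub_sub_self hm,
    sum_add_distrib, sum_const, card_range, smul_eq_mul, sum_range_id, Nat.choose_two_right]
  ring

lemma exists_moveRight_of_ne_highSites {S : Finset (Fin ℓ)} (hm : m ≤ ℓ) (hS : #S = m)
    (hne : S ≠ highSites ℓ m) : ∃ k ∈ S, ∃ h : k.val + 1 < ℓ, ⟨k.val + 1, h⟩ ∉ S := by
  have hcard : #S = #(highSites ℓ m) := by rw [hS, card_highSites hm]
  obtain ⟨k, hkS, hk⟩ : ∃ k ∈ S, k ∉ highSites ℓ m := by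
    by_contra! hsub
    exact hne (eq_of_subset_of_card_le hsub hcard.ge)
  obtain ⟨j, hj, hjS⟩ : ∃ j ∈ highSites ℓ m, j ∉ S := by
    by_contra! hsub
    exact hne (eq_of_subset_of_card_le hsub hcard.le).symm
  simp only [highSites, mem_filter, mem_univ, true_and, not_le] at hk hj
  obtain ⟨i, hij, ⟨hi, hiS⟩, hnext⟩ :=
    Nat.exists_lt_and_not_succ (p := fun i => ∃ h : i < ℓ, ⟨i, h⟩ ∈ S) (by omega) ⟨k.2, hkS⟩
      fun ⟨_, h⟩ => hjS h
  exact ⟨⟨i, hi⟩, hiS, lt_of_le_of_lt hij j.2, fun h => hnext ⟨_, h⟩⟩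

lemma eq_highSites_of_weight_eq {S : Finset (Fin ℓ)} (hm : m ≤ ℓ) (hS : #S = m)
    (hw : weight S = m.choose 2 + m * (ℓ - m)) : S = highSites ℓ m := by
  by_contra hne
  obtain ⟨k, hk, h, hk'⟩ := exists_moveRight_of_ne_highSites hm hS hne
  have := weight_le_choose_card_two_add (moveRight S k h)
  rw [weight_moveRight hk hk', card_moveRight hk hk', hS] at this
  omega

end Sites

section Operator

variable {ℓ m : ℕ}

lemma Mlm_apply (f : Config ℓ m → ℂ) (T : Config ℓ m) :
    Mlm ℓ m f T = ∑ S : Config ℓ m, (moveCount S.1 T.1 : ℂ) * f S :=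
  rfl

lemma exists_weight_eq_of_Mlm_pow_apply_ne_zero (n : ℕ) (f : Config ℓ m → ℂ) (T : Config ℓ m)
    (h : (Mlm ℓ m ^ n) f T ≠ 0) : ∃ S, f S ≠ 0 ∧ weight T.1 = weight S.1 + n := by
  induction n generalizing T with
  | zero => exact ⟨T, h, rfl⟩
  | succ n ih =>
    rw [pow_succ', Module.End.mul_apply, Mlm_apply] at h
    obtain ⟨S', -, hS'⟩ := exists_ne_zero_of_sum_ne_zero h
    obtain ⟨hmove, hpow⟩ := mul_ne_zero_iff.1 hS'
    obtain ⟨k, hk, _, hk', hT⟩ := moveCount_ne_zero_iff.1 (Nat.cast_ne_zero.1 hmove)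
    obtain ⟨S, hS, hw⟩ := ih S' hpow
    exact ⟨S, hS, by rw [hT, weight_moveRight hk hk', hw, add_assoc]⟩

theorem Mlm_pow_eq_zero (ℓ m : ℕ) : Mlm ℓ m ^ (m * (ℓ - m) + 1) = 0 := by
  refine LinearMap.ext fun f => funext fun T => ?_
  by_contra h
  obtain ⟨S, -, hw⟩ := exists_weight_eq_of_Mlm_pow_apply_ne_zero _ f T h
  have hS := choose_card_two_le_weight S.1
  have hT := weight_le_choose_card_two_add T.1
  rw [S.2] at hS
  rw [T.2] at hT
  omega

/-- `Mlm` on `ℕ`-valued vectors: there is no cancellation, so one nonzero term makes a sum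
nonzero. -/
noncomputable def natShift (f : Config ℓ m → ℕ) (T : Config ℓ m) : ℕ :=
  ∑ S : Config ℓ m, moveCount S.1 T.1 * f S

lemma Mlm_pow_natCast (n : ℕ) (f : Config ℓ m → ℕ) :
    (Mlm ℓ m ^ n) (fun S => (f S : ℂ)) = fun T => (natShift^[n] f T : ℂ) := by
  induction n with
  | zero => rfl
  | succ n ih =>
    ext T
    rw [pow_succ', Module.End.mul_apply, ih, Function.iterate_succ_apply', Mlm_apply, natShift]
    push_cast
    rfl

lemma natShift_ne_zero {f : Config ℓ m → ℕ} {S T : Config ℓ m} (hf : f S ≠ 0)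
    (hST : moveCount S.1 T.1 ≠ 0) : natShift f T ≠ 0 := by
  rw [natShift, Ne, sum_eq_zero_iff]
  exact fun h => mul_ne_zero hST hf (h S (mem_univ S))

def lowConfig (hm : m ≤ ℓ) : Config ℓ m := ⟨lowSites ℓ m, card_lowSites hm⟩

def highConfig (hm : m ≤ ℓ) : Config ℓ m := ⟨highSites ℓ m, card_highSites hm⟩

lemma exists_weight_eq_natShift_iterate_ne_zero (hm : m ≤ ℓ) {n : ℕ} (hn : n ≤ m * (ℓ - m)) :
    ∃ T : Config ℓ m, weight T.1 = m.choose 2 + n ∧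
      natShift^[n] (Pi.single (lowConfig hm) 1) T ≠ 0 := by
  induction n with
  | zero => exact ⟨lowConfig hm, weight_lowSites hm, by simp⟩
  | succ n ih =>
    obtain ⟨T, hw, hT⟩ := ih (by omega)
    have hne : T.1 ≠ highSites ℓ m := fun h => by
      rw [h, weight_highSites hm] at hw
      omega
    obtain ⟨k, hk, h, hk'⟩ := exists_moveRight_of_ne_highSites hm T.2 hne
    refine ⟨⟨moveRight T.1 k h, (card_moveRight hk hk').trans T.2⟩,
      by rw [weight_moveRight hk hk', hw, add_assoc], ?_⟩
    rw [Function.iterate_succ_apply']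
    exact natShift_ne_zero hT (moveCount_ne_zero_iff.2 ⟨k, hk, h, hk', rfl⟩)

theorem Mlm_pow_single_lowConfig (hm : m ≤ ℓ) : ∃ c : ℕ, c ≠ 0 ∧
    (Mlm ℓ m ^ (m * (ℓ - m))) (Pi.single (lowConfig hm) 1) =
      (c : ℂ) • Pi.single (highConfig hm) 1 := by
  set g := natShift^[m * (ℓ - m)] (Pi.single (lowConfig hm) 1)
  have hcast : (Pi.single (lowConfig hm) 1 : Config ℓ m → ℂ) =
      fun S => ((Pi.single (lowConfig hm) 1 : Config ℓ m → ℕ) S : ℂ) := by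
    ext S
    by_cases h : S = lowConfig hm <;> simp [h]
  have hsupp : ∀ T, g T ≠ 0 → T = highConfig hm := fun T hT => by
    rw [← Nat.cast_ne_zero (R := ℂ), ← congrFun (Mlm_pow_natCast _ _) T, ← hcast] at hT
    obtain ⟨S, hS, hw⟩ := exists_weight_eq_of_Mlm_pow_apply_ne_zero _ _ T hT
    obtain rfl : S = lowConfig hm := by
      by_contra h
      simp [h] at hS
    rw [lowConfig, weight_lowSites hm] at hw
    exact Subtype.ext (eq_highSites_of_weight_eq hm T.2 hw)
  obtain ⟨T, -, hT⟩ := exists_weight_eq_natShift_iterate_ne_zero hm le_rfl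
  refine ⟨g (highConfig hm), hsupp T hT ▸ hT, ?_⟩
  rw [hcast, Mlm_pow_natCast]
  ext T
  by_cases h : T = highConfig hm
  · simp [h, g]
  · simp [h, g, not_imp_comm.1 (hsupp T) h]

end Operator

/-- `M_{ℓ,m}` is nilpotent: `(M_{ℓ,m})^{m(ℓ-m)+1} = 0` while
`(M_{ℓ,m})^{m(ℓ-m)} ≠ 0`; moreover for `0 < m < ℓ` the power `(M_{ℓ,m})^{m(ℓ-m)}`
maps the minimal configuration `{1,…,m}` to a positive multiple of the maximal
configuration `{ℓ-m+1,…,ℓ}` (sites `1,…,ℓ` are the elements `k+1`, `k : Fin ℓ`). -/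
theorem Mlm_nilpotent (ℓ m : ℕ) (hm : m ≤ ℓ) :
    (Mlm ℓ m) ^ (m * (ℓ - m) + 1) = 0 ∧ (Mlm ℓ m) ^ (m * (ℓ - m)) ≠ 0 ∧
    ∀ (Smin Smax : {S : Finset (Fin ℓ) // S.card = m}),
      (∀ k : Fin ℓ, k ∈ Smin.1 ↔ k.val < m) →
      (∀ k : Fin ℓ, k ∈ Smax.1 ↔ ℓ - m ≤ k.val) →
      0 < m → m < ℓ →
      ∃ c : ℝ, 0 < c ∧
        ((Mlm ℓ m) ^ (m * (ℓ - m)))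
            (Pi.single Smin 1 : {S : Finset (Fin ℓ) // S.card = m} → ℂ)
          = (c : ℂ) • (Pi.single Smax 1 : {S : Finset (Fin ℓ) // S.card = m} → ℂ) := by
  obtain ⟨c, hc, hpow⟩ := Mlm_pow_single_lowConfig hm
  refine ⟨Mlm_pow_eq_zero ℓ m, fun h => hc ?_, fun Smin Smax hmin hmax _ _ => ?_⟩
  · simpa [h, eq_comm] using congrFun hpow (highConfig hm)
  · obtain rfl : Smin = lowConfig hm :=
      Subtype.ext <| ext fun k => by simp [lowConfig, lowSites, hmin]
    obtain rfl : Smax = highConfig hm :=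
      Subtype.ext <| ext fun k => by simp [highConfig, highSites, hmax]
    exact ⟨c, by positivity, by exact_mod_cast hpow⟩
end

section
/- The nilpotent operator M_{6,3} on the 20-dimensional space V_{6,3} has exactly three Jordan blocks, of sizes 10, 6, and 4; equivalently, dim ker(M_{6,3})^d − dim ker(M_{6,3})^{d-1} takes the values 3,3,3,3,2,2,1,1,1,1 for d = 1,…,10. -/
open Finset

/-!
`M_{6,3}` raises the weight `∑ S` by one. Solving `M⁶ v = 0` in weight 8 and `M⁴ v = 0` in
weight 9 gives the generators `e₁₂₃`, `e₁₂₅ - e₁₃₄` and `8 e₁₂₆ - 5 e₁₃₅ + 8 e₂₃₄` (sites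
`1,…,6`), whose Jordan chains have lengths 10, 6 and 4. An explicit integer dual family shows
that these 20 chain vectors are linearly independent, so they form a Jordan basis. For a Jordan
basis with chain lengths `nᵢ` the range of `Aᵈ` is spanned by the chain vectors of depth `≥ d`,
so `dim ker Aᵈ = ∑ min d nᵢ` and the jump at `d` is the number of chains of length `≥ d`.
-/

open Module Matrix

theorem Fintype.card_sigma_fin_le_snd {ι : Type*} [Fintype ι] (n : ι → ℕ) (d : ℕ) :
    Fintype.card {x : (i : ι) × Fin (n i) // d ≤ x.2.1} = ∑ i, (n i - d) := by
  rw [Fintype.card_subtype, ← Finset.univ_sigma_univ, Finset.filter_sigma, Finset.card_sigma]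
  refine Finset.sum_congr rfl fun i _ => ?_
  have hlt := Fin.card_filter_val_lt (n := n i) (m := d)
  have hsplit := card_filter_add_card_filter_not (s := (univ : Finset (Fin (n i))))
    (fun k : Fin (n i) => (k : ℕ) < d)
  simp only [not_lt, card_univ, Fintype.card_fin] at hsplit
  dsimp only
  omega

namespace Module.End

variable {K V ι : Type*} [Field K] [AddCommGroup V] [Module K V] {n : ι → ℕ}

def IsJordanChainBasis (A : Module.End K V) (b : Basis ((i : ι) × Fin (n i)) K V) : Prop :=
  ∀ i (k : Fin (n i)),
    A (b ⟨i, k⟩) = if h : k.1 + 1 < n i then b ⟨i, ⟨k.1 + 1, h⟩⟩ else 0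

namespace IsJordanChainBasis

variable {A : Module.End K V} {b : Basis ((i : ι) × Fin (n i)) K V}

theorem pow_apply (hA : A.IsJordanChainBasis b) (d : ℕ) (i : ι) (k : Fin (n i)) :
    (A ^ d) (b ⟨i, k⟩) = if h : k.1 + d < n i then b ⟨i, ⟨k.1 + d, h⟩⟩ else 0 := by
  induction d with
  | zero => simp
  | succ d ih =>
    rw [pow_succ', Module.End.mul_apply, ih]
    by_cases hd : k.1 + d < n i
    · simpa only [dif_pos hd, add_assoc] using hA i ⟨k.1 + d, hd⟩
    · rw [dif_neg hd, dif_neg (by omega), map_zero]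

theorem range_pow (hA : A.IsJordanChainBasis b) (d : ℕ) :
    LinearMap.range (A ^ d) =
      Submodule.span K (Set.range fun x : {x : (i : ι) × Fin (n i) // d ≤ x.2.1} => b x) := by
  rw [LinearMap.range_eq_map, ← b.span_eq, Submodule.map_span, ← Set.range_comp]
  apply le_antisymm
  · rw [Submodule.span_le]
    rintro _ ⟨⟨i, k⟩, rfl⟩
    simp only [Function.comp_apply, hA.pow_apply]
    split_ifs with h
    · exact Submodule.subset_span ⟨⟨⟨i, ⟨k.1 + d, h⟩⟩, Nat.le_add_left d k⟩, rfl⟩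
    · exact zero_mem _
  · rw [Submodule.span_le]
    rintro _ ⟨⟨⟨i, k⟩, hk⟩, rfl⟩
    refine Submodule.subset_span ⟨⟨i, ⟨k.1 - d, by omega⟩⟩, ?_⟩
    simp only [Function.comp_apply, hA.pow_apply, Nat.sub_add_cancel hk, k.2, dif_pos]

theorem finrank_range_pow [Fintype ι] (hA : A.IsJordanChainBasis b) (d : ℕ) :
    finrank K (LinearMap.range (A ^ d)) = ∑ i, (n i - d) := by
  rw [hA.range_pow, ← Fintype.card_sigma_fin_le_snd]
  exact finrank_span_eq_card (b.linearIndependent.comp _ Subtype.val_injective)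

theorem finrank_ker_pow [Fintype ι] (hA : A.IsJordanChainBasis b) (d : ℕ) :
    finrank K (LinearMap.ker (A ^ d)) = ∑ i, min d (n i) := by
  have := Module.Finite.of_basis b
  have hV : finrank K V = ∑ i, n i := by
    rw [finrank_eq_card_basis b, Fintype.card_sigma]
    simp
  have hrank := LinearMap.finrank_range_add_finrank_ker (A ^ d)
  rw [hA.finrank_range_pow, hV] at hrank
  have hsum : ∑ i, n i = ∑ i, (n i - d) + ∑ i, min d (n i) := by
    rw [← Finset.sum_add_distrib]
    exact Finset.sum_congr rfl fun i _ => by omega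
  omega

theorem finrank_ker_pow_sub_finrank_ker_pow_pred [Fintype ι] (hA : A.IsJordanChainBasis b)
    {d : ℕ} (hd : 1 ≤ d) :
    finrank K (LinearMap.ker (A ^ d)) - finrank K (LinearMap.ker (A ^ (d - 1))) =
      #{i | d ≤ n i} := by
  have hstep : ∑ i, min d (n i) = ∑ i, min (d - 1) (n i) + #{i | d ≤ n i} := by
    rw [Finset.card_filter, ← Finset.sum_add_distrib]
    exact Finset.sum_congr rfl fun i _ => by split_ifs <;> omega
  rw [hA.finrank_ker_pow, hA.finrank_ker_pow, hstep, Nat.add_sub_cancel_left]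

end IsJordanChainBasis

end Module.End

theorem Mlm_apply_comp_symm {ℓ m : ℕ} {ι : Type*} [Fintype ι]
    (e : ι ≃ {S : Finset (Fin ℓ) // S.card = m}) (g : ι → ℂ) :
    Mlm ℓ m (g ∘ e.symm) =
      (Matrix.of (fun t s => (moveCount (e s).1 (e t).1 : ℂ)) *ᵥ g) ∘ e.symm := by
  funext T
  simp only [Mlm, LinearMap.coe_mk, AddHom.coe_mk, Function.comp_apply, mulVec, dotProduct,
    Matrix.of_apply, Equiv.apply_symm_apply]
  exact Fintype.sum_equiv e.symm _ _ fun S => by simp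

theorem linearIndependent_of_dotProduct_eq_ite {ι m K : Type*} [Field K] [DecidableEq ι]
    [Fintype m] [DecidableEq m] {u φ : ι → m → K} {c : K} (hc : c ≠ 0)
    (h : ∀ x y, φ x ⬝ᵥ u y = if x = y then c else 0) : LinearIndependent K u :=
  .of_pairwise_dual_eq_zero_one u (fun x => dotProductEquiv K m (c⁻¹ • φ x))
    (fun x y hxy => by simp [h, hxy]) (fun x => by simp [h, hc])

namespace M63

def triple : Fin 20 → Finset (Fin 6) :=
  ![{0, 1, 2}, {0, 1, 3}, {0, 1, 4}, {0, 1, 5}, {0, 2, 3}, {0, 2, 4}, {0, 2, 5},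
    {0, 3, 4}, {0, 3, 5}, {0, 4, 5}, {1, 2, 3}, {1, 2, 4}, {1, 2, 5}, {1, 3, 4},
    {1, 3, 5}, {1, 4, 5}, {2, 3, 4}, {2, 3, 5}, {2, 4, 5}, {3, 4, 5}]

theorem card_triple (i : Fin 20) : (triple i).card = 3 := by
  revert i
  decide

theorem triple_injective : Function.Injective triple := by
  decide

theorem card_threeSubsets : Fintype.card {S : Finset (Fin 6) // S.card = 3} = 20 := by
  rw [Fintype.card_finset_len]
  rfl

noncomputable def tripleEquiv : Fin 20 ≃ {S : Finset (Fin 6) // S.card = 3} :=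
  Equiv.ofBijective (fun i => ⟨triple i, card_triple i⟩) <|
    (Fintype.bijective_iff_injective_and_card _).2
      ⟨fun _ _ h => triple_injective (congrArg Subtype.val h), card_threeSubsets.symm⟩

noncomputable def moveMatrix : Matrix (Fin 20) (Fin 20) ℤ :=
  Matrix.of fun t s => (moveCount (triple s) (triple t) : ℤ)

def blockSizes : Fin 3 → ℕ := ![10, 6, 4]

abbrev ChainIndex := (i : Fin 3) × Fin (blockSizes i)

def chainVec : ChainIndex → Fin 20 → ℤ
  | ⟨0, k⟩ => !![1, 0, 0, 0, 0, 0, 0, 0, 0, 0, 0, 0, 0, 0, 0, 0, 0, 0, 0, 0;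
    0, 1, 0, 0, 0, 0, 0, 0, 0, 0, 0, 0, 0, 0, 0, 0, 0, 0, 0, 0;
    0, 0, 1, 0, 1, 0, 0, 0, 0, 0, 0, 0, 0, 0, 0, 0, 0, 0, 0, 0;
    0, 0, 0, 1, 0, 2, 0, 0, 0, 0, 1, 0, 0, 0, 0, 0, 0, 0, 0, 0;
    0, 0, 0, 0, 0, 0, 3, 2, 0, 0, 0, 3, 0, 0, 0, 0, 0, 0, 0, 0;
    0, 0, 0, 0, 0, 0, 0, 0, 5, 0, 0, 0, 6, 5, 0, 0, 0, 0, 0, 0;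
    0, 0, 0, 0, 0, 0, 0, 0, 0, 5, 0, 0, 0, 0, 16, 0, 5, 0, 0, 0;
    0, 0, 0, 0, 0, 0, 0, 0, 0, 0, 0, 0, 0, 0, 0, 21, 0, 21, 0, 0;
    0, 0, 0, 0, 0, 0, 0, 0, 0, 0, 0, 0, 0, 0, 0, 0, 0, 0, 42, 0;
    0, 0, 0, 0, 0, 0, 0, 0, 0, 0, 0, 0, 0, 0, 0, 0, 0, 0, 0, 42] k
  | ⟨1, k⟩ => !![0, 0, 1, 0, -1, 0, 0, 0, 0, 0, 0, 0, 0, 0, 0, 0, 0, 0, 0, 0;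
    0, 0, 0, 1, 0, 0, 0, 0, 0, 0, -1, 0, 0, 0, 0, 0, 0, 0, 0, 0;
    0, 0, 0, 0, 0, 0, 1, 0, 0, 0, 0, -1, 0, 0, 0, 0, 0, 0, 0, 0;
    0, 0, 0, 0, 0, 0, 0, 0, 1, 0, 0, 0, 0, -1, 0, 0, 0, 0, 0, 0;
    0, 0, 0, 0, 0, 0, 0, 0, 0, 1, 0, 0, 0, 0, 0, 0, -1, 0, 0, 0;
    0, 0, 0, 0, 0, 0, 0, 0, 0, 0, 0, 0, 0, 0, 0, 1, 0, -1, 0, 0] k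
  | ⟨2, k⟩ => !![0, 0, 0, 8, 0, -5, 0, 0, 0, 0, 8, 0, 0, 0, 0, 0, 0, 0, 0, 0;
    0, 0, 0, 0, 0, 0, 3, -5, 0, 0, 0, 3, 0, 0, 0, 0, 0, 0, 0, 0;
    0, 0, 0, 0, 0, 0, 0, 0, -2, 0, 0, 0, 6, -2, 0, 0, 0, 0, 0, 0;
    0, 0, 0, 0, 0, 0, 0, 0, 0, -2, 0, 0, 0, 0, 2, 0, -2, 0, 0, 0] k

def dualVec : ChainIndex → Fin 20 → ℤ
  | ⟨0, k⟩ => !![42, 0, 0, 0, 0, 0, 0, 0, 0, 0, 0, 0, 0, 0, 0, 0, 0, 0, 0, 0;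
    0, 42, 0, 0, 0, 0, 0, 0, 0, 0, 0, 0, 0, 0, 0, 0, 0, 0, 0, 0;
    0, 0, 21, 0, 21, 0, 0, 0, 0, 0, 0, 0, 0, 0, 0, 0, 0, 0, 0, 0;
    0, 0, 0, 5, 0, 16, 0, 0, 0, 0, 5, 0, 0, 0, 0, 0, 0, 0, 0, 0;
    0, 0, 0, 0, 0, 0, 5, 6, 0, 0, 0, 5, 0, 0, 0, 0, 0, 0, 0, 0;
    0, 0, 0, 0, 0, 0, 0, 0, 3, 0, 0, 0, 2, 3, 0, 0, 0, 0, 0, 0;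
    0, 0, 0, 0, 0, 0, 0, 0, 0, 1, 0, 0, 0, 0, 2, 0, 1, 0, 0, 0;
    0, 0, 0, 0, 0, 0, 0, 0, 0, 0, 0, 0, 0, 0, 0, 1, 0, 1, 0, 0;
    0, 0, 0, 0, 0, 0, 0, 0, 0, 0, 0, 0, 0, 0, 0, 0, 0, 0, 1, 0;
    0, 0, 0, 0, 0, 0, 0, 0, 0, 0, 0, 0, 0, 0, 0, 0, 0, 0, 0, 1] k
  | ⟨1, k⟩ => !![0, 0, 21, 0, -21, 0, 0, 0, 0, 0, 0, 0, 0, 0, 0, 0, 0, 0, 0, 0;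
    0, 0, 0, 21, 0, 0, 0, 0, 0, 0, -21, 0, 0, 0, 0, 0, 0, 0, 0, 0;
    0, 0, 0, 0, 0, 0, 21, 0, 0, 0, 0, -21, 0, 0, 0, 0, 0, 0, 0, 0;
    0, 0, 0, 0, 0, 0, 0, 0, 21, 0, 0, 0, 0, -21, 0, 0, 0, 0, 0, 0;
    0, 0, 0, 0, 0, 0, 0, 0, 0, 21, 0, 0, 0, 0, 0, 0, -21, 0, 0, 0;
    0, 0, 0, 0, 0, 0, 0, 0, 0, 0, 0, 0, 0, 0, 0, 21, 0, -21, 0, 0] k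
  | ⟨2, k⟩ => !![0, 0, 0, 2, 0, -2, 0, 0, 0, 0, 2, 0, 0, 0, 0, 0, 0, 0, 0, 0;
    0, 0, 0, 0, 0, 0, 2, -6, 0, 0, 0, 2, 0, 0, 0, 0, 0, 0, 0, 0;
    0, 0, 0, 0, 0, 0, 0, 0, -3, 0, 0, 0, 5, -3, 0, 0, 0, 0, 0, 0;
    0, 0, 0, 0, 0, 0, 0, 0, 0, -8, 0, 0, 0, 0, 5, 0, -8, 0, 0, 0] k

theorem moveMatrix_mulVec_chainVec : ∀ x : ChainIndex, moveMatrix *ᵥ chainVec x =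
    if h : x.2.1 + 1 < blockSizes x.1 then chainVec ⟨x.1, ⟨x.2.1 + 1, h⟩⟩ else 0 := by
  decide

theorem dualVec_dotProduct_chainVec :
    ∀ x y : ChainIndex, dualVec x ⬝ᵥ chainVec y = if x = y then 42 else 0 := by
  decide

noncomputable def jordanVec (x : ChainIndex) : {S : Finset (Fin 6) // S.card = 3} → ℂ :=
  (Int.cast ∘ chainVec x) ∘ tripleEquiv.symm

theorem linearIndependent_jordanVec : LinearIndependent ℂ jordanVec := by
  have hC : LinearIndependent ℂ fun x => (Int.cast ∘ chainVec x : Fin 20 → ℂ) := by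
    refine linearIndependent_of_dotProduct_eq_ite (φ := fun x j => (dualVec x j : ℂ))
      (c := 42) (by norm_num) fun x y => ?_
    have hxy := congrArg (Int.castRingHom ℂ) (dualVec_dotProduct_chainVec x y)
    rw [RingHom.map_dotProduct] at hxy
    split_ifs at hxy ⊢ <;> simpa [Function.comp_def] using hxy
  exact hC.map' (LinearEquiv.funCongrLeft ℂ ℂ tripleEquiv.symm).toLinearMap
    (LinearEquiv.ker _)

noncomputable def jordanBasis : Basis ChainIndex ℂ ({S : Finset (Fin 6) // S.card = 3} → ℂ) :=
  basisOfLinearIndependentOfCardEqFinrank' _ linearIndependent_jordanVec <| by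
    rw [finrank_fintype_fun_eq_card, card_threeSubsets]
    rfl

theorem isJordanChainBasis_jordanBasis : Module.End.IsJordanChainBasis (Mlm 6 3) jordanBasis := by
  intro i k
  have hmatrix : Matrix.of (fun t s => (moveCount (tripleEquiv s).1 (tripleEquiv t).1 : ℂ)) =
      moveMatrix.map (Int.cast : ℤ → ℂ) := by
    ext t s
    simp [moveMatrix, tripleEquiv]
  have hcast (v : Fin 20 → ℤ) :
      moveMatrix.map (Int.cast : ℤ → ℂ) *ᵥ (Int.cast ∘ v) = Int.cast ∘ (moveMatrix *ᵥ v) :=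
    funext fun j => (RingHom.map_mulVec (Int.castRingHom ℂ) moveMatrix v j).symm
  simp only [jordanBasis, coe_basisOfLinearIndependentOfCardEqFinrank', jordanVec,
    Mlm_apply_comp_symm, hmatrix, hcast, moveMatrix_mulVec_chainVec ⟨i, k⟩]
  split_ifs
  · rfl
  · ext
    simp

end M63

/-- the nilpotent operator `M_{6,3}` on the 20-dimensional space
`V_{6,3}` has exactly three Jordan blocks, of sizes 10, 6 and 4; equivalently
`dim ker (M_{6,3})^d − dim ker (M_{6,3})^{d-1}` takes the values
`3,3,3,3,2,2,1,1,1,1` for `d = 1,…,10`. -/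
theorem jordan_structure_M63 :
    Fintype.card {S : Finset (Fin 6) // S.card = 3} = 20 ∧
    ∀ d : ℕ, 1 ≤ d → d ≤ 10 →
      Module.finrank ℂ (LinearMap.ker ((Mlm 6 3) ^ d))
          - Module.finrank ℂ (LinearMap.ker ((Mlm 6 3) ^ (d - 1)))
        = [3, 3, 3, 3, 2, 2, 1, 1, 1, 1].getD (d - 1) 0 := by
  refine ⟨M63.card_threeSubsets, fun d hd₁ hd₁₀ => ?_⟩
  rw [M63.isJordanChainBasis_jordanBasis.finrank_ker_pow_sub_finrank_ker_pow_pred hd₁]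
  interval_cases d <;> decide
end
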